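/- arXiv:2107.14616 — 2 statements merged into one kernel-verified Lean document; each statement's English description precedes it below -/
import Mathlib

section
/- Let r ∈ [1,∞), let s be a nonnegative integer, and let (a_j)_{0≤j≤2^s} be complex numbers. Then for all integers 0 ≤ j, j₀ ≤ 2^s one has |a_j| ≤ |a_{j₀}| + 2^{1/r'} Σ_{l=0}^{s} ( Σ_{κ=0}^{2^{s−l}−1} |a_{κ2^l} − a_{(κ+1)2^l}|^r )^{1/r}, where r' is the Hölder conjugate of r, i.e. 1/r + 1/r' = 1 (with r' = ∞ and 2^{1/r'} = 1 when r = 1). -/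
open MeasureTheory Complex Real
open scoped ENNReal
attribute [local instance] Classical.propDecidable
noncomputable section

/-- `ℤ^n`. -/
abbrev Zn (n : ℕ) := Fin n → ℤ
/-- `ℝ^n` with the Euclidean norm. -/
abbrev Rn (n : ℕ) := EuclideanSpace ℝ (Fin n)

/-- `e(t) = exp(2πit)`. -/
def eC (t : ℝ) : ℂ := Complex.exp (2 * Real.pi * Complex.I * t)

/-- The canonical embedding `ℤ^n → ℝ^n`. -/
def itc {n : ℕ} (y : Zn n) : Rn n := WithLp.toLp 2 (fun i => (y i : ℝ))

/-- `|y|^{2d} = (y₁² + ⋯ + y_n²)^d` for `y ∈ ℤ^n`. -/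
def nsq2d {n : ℕ} (d : ℕ) (y : Zn n) : ℤ := (∑ i, (y i)^2)^d

/-- The `ℓ^p(ℤ^n)` norm (with values in `ℝ≥0∞`) of an `ℝ≥0∞`-valued function. -/
def lpZ {n : ℕ} (p : ℝ≥0∞) (g : Zn n → ℝ≥0∞) : ℝ≥0∞ :=
  if p = ⊤ then ⨆ x, g x else (∑' x, g x ^ p.toReal) ^ (1 / p.toReal)

/-- The Gauss sum `S(a/q, b/q) = q^{-n} Σ_{r ∈ [q]^n} e((a|r|^{2d} + b·r)/q)`. -/
def Sgauss (n d : ℕ) (a : ℤ) (q : ℕ) (b : Zn n) : ℂ :=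
  ((q:ℂ))⁻¹ ^ n * ∑ r ∈ Fintype.piFinset (fun _ : Fin n => Finset.range q),
    eC (((a * (∑ i, ((r i : ℤ))^2)^d + ∑ i, b i * (r i : ℤ) : ℤ) : ℝ) / q)

/-- The Fourier transform of a finitely supported `f : ℤ^n → ℂ`. -/
def fhat {n : ℕ} (f : Zn n → ℂ) (ξ : Rn n) : ℂ :=
  ∑' y : Zn n, f y * eC (-(∑ i, (y i : ℝ) * ξ i))

/-- The fundamental domain `[0,1)^n`. -/
def box (n : ℕ) : Set (Rn n) := {ξ : Rn n | ∀ i, ξ i ∈ Set.Ico (0:ℝ) 1}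

/-- The multiplier operator `G(D) f (x) = ∫_{[0,1)^n} G(ξ) f̂(ξ) e(x·ξ) dξ` on `ℤ^n`. -/
def mop {n : ℕ} (G : Rn n → ℂ) (f : Zn n → ℂ) (x : Zn n) : ℂ :=
  ∫ ξ in box n, G ξ * fhat f ξ * eC (∑ i, (x i : ℝ) * ξ i)

/-- `m_{j,λ}(ξ) = Σ_{y∈ℤ^n} e(λ|y|^{2d} + ξ·y) K_j(y)`. -/
def mj {n : ℕ} (d : ℕ) (Kj : Rn n → ℂ) (lam : ℝ) (ξ : Rn n) : ℂ :=
  ∑' y : Zn n, eC (lam * ((nsq2d d y : ℤ) : ℝ) + ∑ i, ξ i * (y i : ℝ)) * Kj (itc y)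

/-- `Φ_{j,λ}(ξ) = ∫_{ℝ^n} e(λ|y|^{2d} + ξ·y) K_j(y) dy`. -/
def Phi {n : ℕ} (d : ℕ) (Kj : Rn n → ℂ) (lam : ℝ) (ξ : Rn n) : ℂ :=
  ∫ y : Rn n, eC (lam * (∑ i, (y i)^2)^d + ∑ i, ξ i * y i) * Kj y

/-- The standing hypotheses on the dyadic kernel piece `K_j` (with constant `C₀`). -/
def KjHyp {n : ℕ} (C₀ : ℝ) (j : ℕ) (Kj : Rn n → ℂ) : Prop :=
  ContDiff ℝ 1 Kj ∧
  Function.support Kj ⊆ Metric.closedBall 0 ((2:ℝ)^(j+1)) ∧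
  (2 ≤ j → Function.support Kj ⊆ {x : Rn n | (2:ℝ)^(j-1) ≤ ‖x‖}) ∧
  (∀ x, ‖Kj x‖ ≤ C₀ * (2:ℝ)^(-((j:ℝ)*n))) ∧
  (∀ x, ‖fderiv ℝ Kj x‖ ≤ C₀ * (2:ℝ)^(-((j:ℝ)*(n+1))))

/-- The major arcs `X_{j,M}`. -/
def Xset (d : ℕ) (j : ℕ) (M : ℝ) : Set ℝ :=
  {lam : ℝ | ∃ a : ℤ, ∃ q : ℕ, 1 ≤ q ∧ (q:ℝ) ≤ (j:ℝ)^M ∧ Int.gcd a q = 1 ∧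
    |lam - (a:ℝ)/q| ≤ (2:ℝ)^(-(2*(d:ℝ)*j)) * (j:ℝ)^M}

/-- Standing hypotheses on the smooth radial cutoff `χ`. -/
def chiHyp {n : ℕ} (χ : Rn n → ℝ) : Prop :=
  ContDiff ℝ (⊤ : ℕ∞) χ ∧ (∀ ξ ξ' : Rn n, ‖ξ‖ = ‖ξ'‖ → χ ξ = χ ξ') ∧
  (∀ ξ, χ ξ ∈ Set.Icc (0:ℝ) 1) ∧
  (∀ ξ : Rn n, ‖ξ‖ ≤ 1/4 → χ ξ = 1) ∧
  (Function.support χ ⊆ {ξ : Rn n | ‖ξ‖ ≤ 1/2})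

/-- `χ_{s,M}(ξ) = χ(2^{4s·2^{s/(2M)}} ξ)`. -/
def chiS {n : ℕ} (χ : Rn n → ℝ) (M : ℝ) (s : ℕ) (ξ : Rn n) : ℝ :=
  χ ((2:ℝ) ^ (4*(s:ℝ) * (2:ℝ) ^ ((s:ℝ)/(2*M))) • ξ)

/-- `α = a/q ∈ 𝒜_s`, i.e. `2^{s-1} ≤ q < 2^s` for the reduced rational `α`. -/
def Amem (s : ℕ) (α : ℚ) : Prop := 2^(s-1) ≤ α.den ∧ α.den < 2^s

/-- The periodic multi-frequency multiplier `𝓛_{s,α}[m]` (with cutoff `χsM`). -/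
def Lop (n d : ℕ) (χsM : Rn n → ℝ) (α : ℚ) (m : Rn n → ℂ) (ξ : Rn n) : ℂ :=
  ∑' b : Zn n, Sgauss n d α.num α.den b * m (ξ - ((α.den : ℝ))⁻¹ • itc b) *
    (χsM (ξ - ((α.den : ℝ))⁻¹ • itc b) : ℂ)

/-- `φ_{s,M}(y) = 𝓕^{-1}_{ℝ^n}[χ_{s,M}](y)`, evaluated at `y ∈ ℤ^n`. -/
def phiSZ {n : ℕ} (χsM : Rn n → ℝ) (y : Zn n) : ℂ :=
  ∫ ξ : Rn n, (χsM ξ : ℂ) * eC (∑ i, (y i : ℝ) * ξ i)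

/-- `φ_{s,M}(x) = 𝓕^{-1}_{ℝ^n}[χ_{s,M}](x)` on `ℝ^n`. -/
def phiSR {n : ℕ} (χsM : Rn n → ℝ) (x : Rn n) : ℂ :=
  ∫ ξ : Rn n, (χsM ξ : ℂ) * eC (∑ i, x i * ξ i)

/-- The convolution operator `𝓛_{s,α}[m](D)` written on the space side:
`T_{s,α}[m] f(x) = Σ_y f(x-y) e(α|y|^{2d}) 𝓕^{-1}[m χ_{s,M}](y)`. -/
def TopM {n : ℕ} (d : ℕ) (χsM : Rn n → ℝ) (m : Rn n → ℂ) (α : ℚ) (f : Zn n → ℂ) (x : Zn n) : ℂ :=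
  ∑' y : Zn n, f (x - y) * eC ((α:ℝ) * ((nsq2d d y : ℤ):ℝ)) *
    ∫ ξ : Rn n, m ξ * (χsM ξ : ℂ) * eC (∑ i, (y i : ℝ) * ξ i)

/-- `T_{s,α} f(x) = Σ_y f(x-y) e(α|y|^{2d}) φ_{s,M}(y)`. -/
def TopS {n : ℕ} (d : ℕ) (χsM : Rn n → ℝ) (α : ℚ) (f : Zn n → ℂ) (x : Zn n) : ℂ :=
  ∑' y : Zn n, f (x - y) * eC ((α:ℝ) * ((nsq2d d y : ℤ):ℝ)) * phiSZ χsM y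

/-- The kernel `𝒦^♯_{j,λ}(x,y)` of `T_{j,λ} T_{j,λ}^*`. -/
def Ksharp {n : ℕ} (d : ℕ) (Kj : Rn n → ℂ) (j : ℕ) (lam : Zn n → ℝ) (x y : Zn n) : ℂ :=
  ∑' z : Zn n, eC (lam x * ((nsq2d d z : ℤ):ℝ) - lam y * ((nsq2d d (y - x + z) : ℤ):ℝ)) *
    Kj (itc z) * (starRingEnd ℂ) (Kj (itc (y - x + z))) *
    Set.indicator {w : Zn n | ‖itc w‖ ≤ (2:ℝ)^j} (fun _ => (1:ℂ)) (x - z)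

/-- `Φ_{j,ν,M} = Φ_{j,ν} 1_{|ν| ≤ 2^{-2dj} j^M}`. -/
def PhiM {n : ℕ} (d : ℕ) (Kj : Rn n → ℂ) (j : ℕ) (M : ℝ) (ν : ℝ) (ξ : Rn n) : ℂ :=
  if |ν| ≤ (2:ℝ)^(-(2*(d:ℝ)*j)) * (j:ℝ)^M then Phi d Kj ν ξ else 0

/-- The major arc multiplier piece `L^s_{j,λ,M}`. -/
def Lsmult (n d : ℕ) (χ : Rn n → ℝ) (Kj : Rn n → ℂ) (j s : ℕ) (M lam : ℝ) (ξ : Rn n) : ℂ :=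
  if h : ∃ α : ℚ, Amem s α ∧ |lam - (α:ℝ)| ≤ (2:ℝ)^(-(4*(s:ℝ)*(2:ℝ)^((s:ℝ)/(2*M)))) then
    ∑' b : Zn n, Sgauss n d h.choose.num h.choose.den b *
      PhiM d Kj j M (lam - (h.choose : ℝ)) (ξ - ((h.choose.den : ℝ))⁻¹ • itc b) *
      (chiS χ M s (ξ - ((h.choose.den : ℝ))⁻¹ • itc b) : ℂ)
  else 0

/-- The error multiplier `E_{j,λ,M}`. -/
def Esmult (n d : ℕ) (χ : Rn n → ℝ) (Kj : Rn n → ℂ) (j : ℕ) (M lam : ℝ) (ξ : Rn n) : ℂ :=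
  (if lam ∈ Xset d j M then mj d Kj lam ξ else 0)
    - ∑' s : ℕ, if 1 ≤ s ∧ (2:ℝ)^s ≤ (j:ℝ)^M then Lsmult n d χ Kj j s M lam ξ else 0
lemma pm2 {r x y : ℝ} (hr : 1 ≤ r) (hx : 0 ≤ x) (hy : 0 ≤ y) :
    x + y ≤ (2:ℝ)^(1-1/r) * (x^r + y^r)^(1/r) := by
  have hr0 : (0:ℝ) < r := lt_of_lt_of_le one_pos hr
  have h1 : (x+y)^r ≤ (2:ℝ)^(r-1) * (x^r + y^r) := by
    lift x to NNReal using hx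
    lift y to NNReal using hy
    exact_mod_cast NNReal.rpow_add_le_mul_rpow_add_rpow x y hr
  have h2 : x + y = ((x+y)^r)^(1/r) := by
    rw [one_div, Real.rpow_rpow_inv (by positivity) hr0.ne']
  calc x + y = ((x+y)^r)^(1/r) := h2
    _ ≤ ((2:ℝ)^(r-1) * (x^r + y^r))^(1/r) :=
        Real.rpow_le_rpow (by positivity) h1 (by positivity)
    _ = (2:ℝ)^(1-1/r) * (x^r + y^r)^(1/r) := by
        rw [Real.mul_rpow (by positivity) (by positivity)]
        congr 1
        rw [← Real.rpow_mul (by norm_num)]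
        congr 1
        field_simp

lemma tstep (a : ℕ → ℂ) (l q : ℕ) :
    a (q * 2^l) - a (q/2 * 2^(l+1))
      = if q % 2 = 1 then a (q * 2^l) - a ((q-1) * 2^l) else 0 := by
  rcases Nat.even_or_odd q with he | ho
  · have h0 : q % 2 = 0 := Nat.even_iff.mp he
    have h2 : q / 2 * 2^(l+1) = q * 2^l := by
      rw [pow_succ', ← mul_assoc]
      congr 1
      omega
    rw [h2, sub_self, if_neg (by omega)]
  · have h1 : q % 2 = 1 := Nat.odd_iff.mp ho
    have h2 : q / 2 * 2^(l+1) = (q-1) * 2^l := by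
      rw [pow_succ', ← mul_assoc]
      congr 1
      omega
    rw [h2, if_pos h1]

/-- Rademacher–Menshov type numerical inequality. -/
theorem stmt4 (r : ℝ) (hr : 1 ≤ r) (s : ℕ) (a : ℕ → ℂ) (j j₀ : ℕ)
    (hj : j ≤ 2^s) (hj₀ : j₀ ≤ 2^s) :
    ‖a j‖ ≤ ‖a j₀‖ + (2:ℝ) ^ (1 - 1/r) *
      ∑ l ∈ Finset.range (s+1),
        (∑ κ ∈ Finset.range (2^(s-l)),
          ‖a (κ * 2^l) - a ((κ+1) * 2^l)‖ ^ r) ^ (1/r) := by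
  have hr0 : (0:ℝ) < r := lt_of_lt_of_le one_pos hr
  set g : ℕ → ℕ → ℝ := fun l κ => ‖a (κ * 2^l) - a ((κ+1) * 2^l)‖ ^ r with hg
  have hgnn : ∀ l κ, 0 ≤ g l κ := fun l κ => by
    simp only [hg]; positivity
  have hdd : ∀ u l : ℕ, u / 2^(l+1) = (u / 2^l) / 2 := by
    intro u l
    rw [pow_succ]
    exact (Nat.div_div_eq_div_mul u (2^l) 2).symm
  have level : ∀ l, l ≤ s → ∀ u v : ℕ, u ≤ 2^s → v ≤ 2^s →
      ‖(a ((u/2^l)*2^l) - a ((u/2^(l+1))*2^(l+1)))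
          - (a ((v/2^l)*2^l) - a ((v/2^(l+1))*2^(l+1)))‖
        ≤ (2:ℝ)^(1-1/r) * (∑ κ ∈ Finset.range (2^(s-l)), g l κ)^(1/r) := by
    intro l hl u v hu hv
    have hsnn : (0:ℝ) ≤ ∑ κ ∈ Finset.range (2^(s-l)), g l κ :=
      Finset.sum_nonneg fun κ _ => hgnn l κ
    have hmain : ∀ x y : ℂ,
        ‖x‖ ^ r + ‖y‖ ^ r ≤ ∑ κ ∈ Finset.range (2^(s-l)), g l κ →
        ‖x - y‖
          ≤ (2:ℝ)^(1-1/r) * (∑ κ ∈ Finset.range (2^(s-l)), g l κ)^(1/r) := by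
      intro x y hxy
      calc ‖x - y‖ ≤ ‖x‖ + ‖y‖ := by
            simpa [sub_eq_add_neg] using norm_add_le x (-y)
        _ ≤ (2:ℝ)^(1-1/r) * (‖x‖ ^ r + ‖y‖ ^ r)^(1/r) :=
            pm2 hr (norm_nonneg x) (norm_nonneg y)
        _ ≤ _ := mul_le_mul_of_nonneg_left
            (Real.rpow_le_rpow (by positivity) hxy (by positivity)) (by positivity)
    have hub : u / 2^l ≤ 2^(s-l) := by
      calc u / 2^l ≤ 2^s / 2^l := Nat.div_le_div_right hu
        _ = 2^(s-l) := Nat.pow_div hl (by norm_num)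
    have hvb : v / 2^l ≤ 2^(s-l) := by
      calc v / 2^l ≤ 2^s / 2^l := Nat.div_le_div_right hv
        _ = 2^(s-l) := Nat.pow_div hl (by norm_num)
    rw [hdd u l, hdd v l]
    obtain ⟨q, hq⟩ : ∃ q, u / 2^l = q := ⟨_, rfl⟩
    obtain ⟨p, hp⟩ : ∃ p, v / 2^l = p := ⟨_, rfl⟩
    rw [hq] at hub ⊢
    rw [hp] at hvb ⊢
    have eterm : ∀ w : ℕ, w % 2 = 1 →
        ‖a (w * 2^l) - a ((w-1) * 2^l)‖ ^ r = g l (w-1) := by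
      intro w hw
      simp only [hg]
      rw [show w - 1 + 1 = w from by omega, norm_sub_rev]
    by_cases hqp : q = p
    · subst hqp
      rw [sub_self, norm_zero]
      exact mul_nonneg (by positivity) (Real.rpow_nonneg hsnn _)
    · rw [tstep a l q, tstep a l p]
      split_ifs with h1 h2 h2
      · apply hmain
        rw [eterm q h1, eterm p h2, ← Finset.sum_pair (show q - 1 ≠ p - 1 by omega)]
        apply Finset.sum_le_sum_of_subset_of_nonneg
        · intro x hx
          simp only [Finset.mem_insert, Finset.mem_singleton] at hx
          rcases hx with rfl | rfl <;> exact Finset.mem_range.mpr (by omega)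
        · intro κ _ _; exact hgnn l κ
      · apply hmain
        rw [eterm q h1, norm_zero, Real.zero_rpow hr0.ne', add_zero]
        exact Finset.single_le_sum (fun κ _ => hgnn l κ) (Finset.mem_range.mpr (by omega))
      · apply hmain
        rw [eterm p h2, norm_zero, Real.zero_rpow hr0.ne', zero_add]
        exact Finset.single_le_sum (fun κ _ => hgnn l κ) (Finset.mem_range.mpr (by omega))
      · apply hmain
        rw [norm_zero, Real.zero_rpow hr0.ne']
        simpa using hsnn
  have tel : ∀ u : ℕ, u ≤ 2^s → a u - a 0
      = ∑ l ∈ Finset.range (s+1), (a ((u/2^l)*2^l) - a ((u/2^(l+1))*2^(l+1))) := by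
    intro u hu
    rw [Finset.sum_range_sub' (f := fun l => a ((u/2^l)*2^l))]
    have h1 : u / 2^0 * 2^0 = u := by simp
    have h2 : u / 2^(s+1) = 0 :=
      Nat.div_eq_of_lt (lt_of_le_of_lt hu (Nat.pow_lt_pow_succ (by norm_num)))
    rw [h1, h2]
    simp
  have key : ‖a j - a j₀‖ ≤ (2:ℝ)^(1-1/r) *
      ∑ l ∈ Finset.range (s+1), (∑ κ ∈ Finset.range (2^(s-l)), g l κ)^(1/r) := by
    have hdiff : a j - a j₀ = ∑ l ∈ Finset.range (s+1),
        ((a ((j/2^l)*2^l) - a ((j/2^(l+1))*2^(l+1)))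
          - (a ((j₀/2^l)*2^l) - a ((j₀/2^(l+1))*2^(l+1)))) := by
      rw [Finset.sum_sub_distrib, ← tel j hj, ← tel j₀ hj₀]
      ring
    rw [hdiff, Finset.mul_sum]
    refine le_trans (norm_sum_le _ _) (Finset.sum_le_sum ?_)
    intro l hl
    exact level l (by simp only [Finset.mem_range] at hl; omega) j j₀ hj hj₀
  have htri : ‖a j‖ ≤ ‖a j₀‖ + ‖a j - a j₀‖ := by
    calc ‖a j‖ = ‖a j₀ + (a j - a j₀)‖ := by ring_nf
      _ ≤ ‖a j₀‖ + ‖a j - a j₀‖ := norm_add_le _ _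
  linarith [key, htri]
end
end

section
/- Let n, d be positive integers and C₀ > 0. There exists a constant C, depending only on d, n and C₀, with the following property. Let j, q be positive integers with q ≤ 2^{j−2}, let a ∈ ℤ and b ∈ ℤ^n with gcd(a, b₁, …, b_n, q) = 1, and let δ ∈ (2^{−j}, 1). If λ ∈ ℝ and ξ ∈ ℝ^n satisfy |λ − a/q| ≤ δ 2^{−(2d−1)j} and |ξ − b/q| ≤ δ, then | m_{j,λ}(ξ) − S(a/q, b/q) Φ_{j, λ−a/q}(ξ − b/q) | ≤ C q δ. -/
open MeasureTheory Complex Real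
open scoped ENNReal
attribute [local instance] Classical.propDecidable
noncomputable section

/-! ### Auxiliary lemmas for Statement 6 -/

section Stmt6Aux

lemma eC_add (s t : ℝ) : eC (s + t) = eC s * eC t := by
  unfold eC
  rw [← Complex.exp_add]
  congr 1
  push_cast
  ring

lemma eC_int (k : ℤ) : eC k = 1 := by
  unfold eC
  rw [show (2 * (Real.pi : ℂ) * Complex.I * ((k : ℝ) : ℂ)) = (k : ℂ) * (2 * Real.pi * Complex.I) by
    push_cast; ring]
  exact Complex.exp_int_mul_two_pi_mul_I k

lemma norm_eC (t : ℝ) : ‖eC t‖ = 1 := by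
  unfold eC
  rw [show (2 * (Real.pi : ℂ) * Complex.I * (t : ℂ)) = ((2 * Real.pi * t : ℝ) : ℂ) * Complex.I by
    push_cast; ring]
  exact Complex.norm_exp_ofReal_mul_I _

lemma eC_hasDerivAt (x : ℝ) : HasDerivAt eC (2 * Real.pi * Complex.I * eC x) x := by
  have h0 : HasDerivAt (fun z : ℂ => 2 * (Real.pi : ℂ) * Complex.I * z)
      (2 * (Real.pi : ℂ) * Complex.I) (x : ℂ) := by
    simpa using (hasDerivAt_id ((x : ℝ) : ℂ)).const_mul (2 * (Real.pi : ℂ) * Complex.I)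
  have h1 := (Complex.hasDerivAt_exp (2 * (Real.pi : ℂ) * Complex.I * (x : ℂ))).comp (x : ℂ) h0
  have h2 := h1.comp_ofReal
  have h3 : (2 : ℂ) * Real.pi * Complex.I * eC x
      = Complex.exp (2 * (Real.pi : ℂ) * Complex.I * (x : ℂ)) * (2 * (Real.pi : ℂ) * Complex.I) := by
    unfold eC; ring
  rw [h3]
  exact h2

lemma eC_lip (s t : ℝ) : ‖eC s - eC t‖ ≤ 2 * Real.pi * |s - t| := by
  have := convex_univ.norm_image_sub_le_of_norm_hasDerivWithin_le
    (f := eC) (f' := fun x => 2 * Real.pi * Complex.I * eC x) (C := 2 * Real.pi)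
    (fun x _ => (eC_hasDerivAt x).hasDerivWithinAt)
    (fun x _ => by
      rw [norm_mul, norm_eC, mul_one]
      simp [norm_mul, Complex.norm_I, Complex.norm_real, Real.norm_eq_abs,
        _root_.abs_of_nonneg Real.pi_nonneg])
    (Set.mem_univ t) (Set.mem_univ s)
  simpa [Real.norm_eq_abs] using this

lemma eC_int_div_congr {q : ℕ} (hq : 0 < q) {u v : ℤ} (h : (q : ℤ) ∣ (u - v)) :
    eC ((u : ℝ) / q) = eC ((v : ℝ) / q) := by
  obtain ⟨k, hk⟩ := h
  have hu : u = v + q * k := by linarith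
  have hq0 : (q : ℝ) ≠ 0 := Nat.cast_ne_zero.mpr hq.ne'
  have : (u : ℝ) / q = (v : ℝ) / q + (k : ℝ) := by
    rw [hu]; push_cast; field_simp
  rw [this, eC_add, eC_int, mul_one]

lemma coord_abs_le_norm {n : ℕ} (x : Rn n) (i : Fin n) : |x i| ≤ ‖x‖ := by
  rw [EuclideanSpace.norm_eq]
  have h1 : |x i| = Real.sqrt (|x i| ^ 2) := by
    rw [Real.sqrt_sq (abs_nonneg _)]
  rw [h1]
  apply Real.sqrt_le_sqrt
  exact Finset.single_le_sum (f := fun i => |x i| ^ 2) (fun j _ => sq_nonneg _) (Finset.mem_univ i)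

lemma norm_le_of_coords {n : ℕ} (x : Rn n) (c : ℝ) (hc : 0 ≤ c) (h : ∀ i, |x i| ≤ c) :
    ‖x‖ ≤ c * n := by
  rw [EuclideanSpace.norm_eq]
  have h1 : ∑ i, |x i| ^ 2 ≤ ∑ _i : Fin n, c ^ 2 := by
    apply Finset.sum_le_sum
    intro i _
    exact pow_le_pow_left₀ (abs_nonneg _) (h i) 2
  have h2 : Real.sqrt (∑ i, |x i| ^ 2) ≤ Real.sqrt (n * c ^ 2) := by
    apply Real.sqrt_le_sqrt
    simpa [Finset.sum_const, nsmul_eq_mul] using h1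
  refine h2.trans ?_
  rw [show (n : ℝ) * c ^ 2 = (c * Real.sqrt n) ^ 2 by
    rw [mul_pow, Real.sq_sqrt (Nat.cast_nonneg n)]; ring]
  rw [Real.sqrt_sq (by positivity)]
  have hsn : Real.sqrt n ≤ n := by
    rcases Nat.eq_zero_or_pos n with h0 | h0
    · subst h0; simp
    · have h1 : (1 : ℝ) ≤ n := by exact_mod_cast h0
      have h3 : (n : ℝ) ≤ ((n : ℝ)) ^ 2 := by nlinarith
      calc Real.sqrt n ≤ Real.sqrt ((n : ℝ) ^ 2) := Real.sqrt_le_sqrt h3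
        _ = n := Real.sqrt_sq (Nat.cast_nonneg n)
  exact mul_le_mul_of_nonneg_left hsn hc

lemma sum_sq_eq_norm_sq {n : ℕ} (x : Rn n) : ∑ i, x i ^ 2 = ‖x‖ ^ 2 := by
  rw [EuclideanSpace.norm_eq, Real.sq_sqrt (by positivity)]
  simp [sq_abs]

lemma pow_sub_pow_abs_le {R : ℝ} (hR : 0 ≤ R) :
    ∀ (d : ℕ) (s t : ℝ), 0 ≤ s → 0 ≤ t → s ≤ R → t ≤ R →
      |s ^ d - t ^ d| ≤ d * R ^ (d - 1) * |s - t| := by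
  intro d
  induction d with
  | zero => intro s t _ _ _ _; simp
  | succ d ih =>
    intro s t hs ht hsR htR
    have key : s ^ (d + 1) - t ^ (d + 1) = s * (s ^ d - t ^ d) + (s - t) * t ^ d := by ring
    have h1 : |s ^ (d + 1) - t ^ (d + 1)| ≤ s * |s ^ d - t ^ d| + |s - t| * t ^ d := by
      rw [key]
      refine (abs_add_le _ _).trans ?_
      rw [abs_mul, abs_mul, _root_.abs_of_nonneg hs, _root_.abs_of_nonneg (pow_nonneg ht d)]
    refine h1.trans ?_
    have h2 : s * |s ^ d - t ^ d| ≤ R * (d * R ^ (d - 1) * |s - t|) :=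
      mul_le_mul hsR (ih s t hs ht hsR htR) (abs_nonneg _) hR
    have h3 : |s - t| * t ^ d ≤ R ^ d * |s - t| := by
      rw [mul_comm]
      exact mul_le_mul_of_nonneg_right (pow_le_pow_left₀ ht htR d) (abs_nonneg _)
    refine (add_le_add h2 h3).trans ?_
    have h4 : R * (d * R ^ (d - 1) * |s - t|) ≤ d * R ^ d * |s - t| := by
      rcases Nat.eq_zero_or_pos d with hd | hd
      · subst hd; simp
      · have : R * R ^ (d - 1) = R ^ d := by
          rw [← pow_succ']
          congr 1
          omega
        calc R * (d * R ^ (d - 1) * |s - t|) = d * (R * R ^ (d - 1)) * |s - t| := by ring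
          _ = d * R ^ d * |s - t| := by rw [this]
          _ ≤ d * R ^ d * |s - t| := le_rfl
    refine (add_le_add h4 le_rfl).trans ?_
    have : ((d : ℝ) + 1) * R ^ ((d + 1) - 1) * |s - t| = d * R ^ d * |s - t| + R ^ d * |s - t| := by
      simp only [Nat.add_sub_cancel]
      ring
    rw [Nat.cast_add, Nat.cast_one, this]

/-- Axis-aligned half-open cube with integer corner `w` and side `q`. -/
def IBox {n : ℕ} (q : ℕ) (w : Zn n) : Set (Rn n) :=
  {x : Rn n | ∀ i, (w i : ℝ) ≤ x i ∧ x i < (w i : ℝ) + q}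

lemma IBox_eq_preimage {n : ℕ} (q : ℕ) (w : Zn n) :
    IBox q w = ((MeasurableEquiv.toLp 2 (Fin n → ℝ)).symm) ⁻¹'
      (Set.univ.pi fun i => Set.Ico ((w i : ℝ)) ((w i : ℝ) + q)) := by
  ext x
  simp [IBox, Set.mem_pi]

lemma IBox_measurableSet {n : ℕ} (q : ℕ) (w : Zn n) : MeasurableSet (IBox q w) := by
  rw [IBox_eq_preimage]
  exact ((MeasurableEquiv.toLp 2 (Fin n → ℝ)).symm).measurable
    (MeasurableSet.univ_pi fun i => measurableSet_Ico)

lemma IBox_volume {n : ℕ} (q : ℕ) (w : Zn n) :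
    volume (IBox q w) = ENNReal.ofReal q ^ n := by
  rw [IBox_eq_preimage,
    (EuclideanSpace.volume_preserving_symm_measurableEquiv_toLp (Fin n)).measure_preimage
      (MeasurableSet.univ_pi fun i => measurableSet_Ico).nullMeasurableSet]
  rw [volume_pi_pi]
  simp

lemma IBox_iUnion {n : ℕ} {q : ℕ} (hq : 0 < q) (r : Zn n) :
    (⋃ z : Zn n, IBox q (fun i => q * z i + r i)) = Set.univ := by
  ext x
  simp only [Set.mem_iUnion, Set.mem_univ, iff_true]
  have hq0 : (0:ℝ) < q := by exact_mod_cast hq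
  refine ⟨fun i => ⌊(x i - r i) / q⌋, fun i => ?_⟩
  set z : ℤ := ⌊(x i - r i) / q⌋ with hz
  have h1 : (z : ℝ) ≤ (x i - r i) / q := Int.floor_le _
  have h2 : (x i - r i) / q < z + 1 := Int.lt_floor_add_one _
  rw [le_div_iff₀ hq0] at h1
  rw [div_lt_iff₀ hq0] at h2
  constructor
  · push_cast
    nlinarith
  · push_cast
    nlinarith

lemma IBox_pairwise_disjoint {n : ℕ} {q : ℕ} (hq : 0 < q) (r : Zn n) :
    Pairwise (Function.onFun Disjoint fun z : Zn n => IBox q (fun i => q * z i + r i)) := by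
  intro z z' hzz
  rw [Function.onFun, Set.disjoint_left]
  intro x hx hx'
  apply hzz
  funext i
  obtain ⟨h1, h2⟩ := hx i
  obtain ⟨h1', h2'⟩ := hx' i
  have hq0 : (0:ℝ) < q := by exact_mod_cast hq
  push_cast at h1 h2 h1' h2'
  have e1 : (z i : ℝ) < z' i + 1 := by
    have : (z i : ℝ) * q < (z' i + 1) * q := by nlinarith
    exact lt_of_mul_lt_mul_right this hq0.le
  have e2 : (z' i : ℝ) < z i + 1 := by
    have : (z' i : ℝ) * q < (z i + 1) * q := by nlinarith
    exact lt_of_mul_lt_mul_right this hq0.le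
  have e1' : z i < z' i + 1 := by exact_mod_cast e1
  have e2' : z' i < z i + 1 := by exact_mod_cast e2
  omega

lemma key_dvd {n : ℕ} (d q : ℕ) (a : ℤ) (b : Zn n) (z r : Zn n) :
    (q : ℤ) ∣ (a * (∑ i, ((q : ℤ) * z i + r i)^2)^d + ∑ i, b i * ((q : ℤ) * z i + r i))
      - (a * (∑ i, (r i)^2)^d + ∑ i, b i * r i) := by
  have hsq : (q : ℤ) ∣ (∑ i, (r i)^2) - (∑ i, ((q : ℤ) * z i + r i)^2) := by
    rw [← Finset.sum_sub_distrib]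
    apply Finset.dvd_sum
    intro i _
    exact ⟨-(z i * ((q : ℤ) * z i + 2 * r i)), by ring⟩
  have h1 : (∑ i, ((q : ℤ) * z i + r i)^2) ≡ (∑ i, (r i)^2) [ZMOD (q : ℤ)] :=
    Int.modEq_iff_dvd.mpr hsq
  have hd1 : (q : ℤ) ∣ (∑ i, (r i)^2)^d - (∑ i, ((q : ℤ) * z i + r i)^2)^d :=
    Int.ModEq.dvd (Int.ModEq.pow d h1)
  have hS : (q : ℤ) ∣ (∑ i, b i * ((q : ℤ) * z i + r i)) - ∑ i, b i * r i := by
    rw [← Finset.sum_sub_distrib]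
    apply Finset.dvd_sum
    intro i _
    exact ⟨b i * z i, by ring⟩
  obtain ⟨k1, hk1⟩ := hd1
  obtain ⟨k2, hk2⟩ := hS
  exact ⟨-a * k1 + k2, by linear_combination (-a) * hk1 + hk2⟩

/-- Division with remainder as an equivalence `(Fin n → Fin q) × ℤⁿ ≃ ℤⁿ`. -/
def zEquiv (n q : ℕ) (hq : 0 < q) : ((Fin n → Fin q) × Zn n) ≃ Zn n where
  toFun p := fun i => (q : ℤ) * p.2 i + ((p.1 i : ℕ) : ℤ)
  invFun y := (fun i => ⟨(y i % q).toNat, by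
      have h0 : (0:ℤ) < q := by exact_mod_cast hq
      have h1 := Int.emod_nonneg (y i) h0.ne'
      have h2 := Int.emod_lt_of_pos (y i) h0
      omega⟩,
    fun i => y i / q)
  left_inv p := by
    have h0 : (0:ℤ) < q := by exact_mod_cast hq
    have hlt : ∀ i : Fin n, ((p.1 i : ℕ) : ℤ) < q := fun i => by exact_mod_cast (p.1 i).2
    have hge : ∀ i : Fin n, (0:ℤ) ≤ ((p.1 i : ℕ) : ℤ) := fun i => by positivity
    have hmod : ∀ i, ((q : ℤ) * p.2 i + ((p.1 i : ℕ) : ℤ)) % q = ((p.1 i : ℕ) : ℤ) := by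
      intro i
      rw [add_comm, Int.add_mul_emod_self_left]
      exact Int.emod_eq_of_lt (hge i) (hlt i)
    refine Prod.ext ?_ ?_
    · funext i
      apply Fin.ext
      simp only []
      rw [hmod i]
      simp
    · funext i
      simp only []
      rw [add_comm, Int.add_mul_ediv_left _ _ h0.ne',
        Int.ediv_eq_zero_of_lt (hge i) (hlt i)]
      simp
  right_inv y := by
    have h0 : (0:ℤ) < q := by exact_mod_cast hq
    funext i
    simp only []
    rw [Int.toNat_of_nonneg (Int.emod_nonneg (y i) h0.ne')]
    exact Int.mul_ediv_add_emod (y i) q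

lemma Sgauss_fintype {n : ℕ} (d : ℕ) (a : ℤ) (q : ℕ) (hq : 0 < q) (b : Zn n) :
    Sgauss n d a q b = ((q:ℂ))⁻¹ ^ n * ∑ r : Fin n → Fin q,
      eC (((a * (∑ i, (((r i : ℕ)) : ℤ)^2)^d + ∑ i, b i * ((r i : ℕ) : ℤ) : ℤ) : ℝ) / q) := by
  unfold Sgauss
  congr 1
  refine Finset.sum_bij' (fun (r : Fin n → ℕ) (hr : r ∈ _) (k : Fin n) =>
      (⟨r k, by
        have := Fintype.mem_piFinset.mp hr k
        simpa using this⟩ : Fin q))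
    (fun (c : Fin n → Fin q) _ (k : Fin n) => (c k : ℕ)) ?_ ?_ ?_ ?_ ?_
  · intro a ha; exact Finset.mem_univ _
  · intro c hc
    rw [Fintype.mem_piFinset]
    intro k
    exact Finset.mem_range.mpr (c k).2
  · intro r hr; funext k; rfl
  · intro c hc; funext k; apply Fin.ext; rfl
  · intro r hr; rfl

end Stmt6Aux

set_option maxHeartbeats 2000000

/-- Lemma 2.2: major arc multiplier approximation
`m_{j,λ}(ξ) = S(a/q,b/q) Φ_{j,λ-a/q}(ξ-b/q) + O(qδ)`. -/
theorem stmt6 (n d : ℕ) (hn : 0 < n) (hd : 0 < d) (C₀ : ℝ) (hC₀ : 0 < C₀) :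
    ∃ C : ℝ, 0 < C ∧
      ∀ (j q : ℕ), 1 ≤ j → 1 ≤ q → (q : ℝ) ≤ (2:ℝ) ^ ((j:ℝ) - 2) →
      ∀ Kj : Rn n → ℂ, KjHyp C₀ j Kj →
      ∀ (a : ℤ) (b : Zn n), Nat.gcd (Int.gcd a (Finset.univ.gcd b)) q = 1 →
      ∀ δ : ℝ, (2:ℝ)^(-(j:ℝ)) < δ → δ < 1 →
      ∀ (lam : ℝ) (ξ : Rn n),
        |lam - (a:ℝ)/q| ≤ δ * (2:ℝ)^(-((2*(d:ℝ)-1) * j)) →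
        ‖ξ - ((q:ℝ))⁻¹ • itc b‖ ≤ δ →
        ‖mj d Kj lam ξ - Sgauss n d a q b * Phi d Kj (lam - (a:ℝ)/q) (ξ - ((q:ℝ))⁻¹ • itc b)‖
          ≤ C * q * δ := by
  have hn' : (0:ℝ) < n := by exact_mod_cast hn
  have hπ : (0:ℝ) < Real.pi := Real.pi_pos
  refine ⟨8^n * n * (2*Real.pi*(2*(d:ℝ)*(4*(n:ℝ))^(2*d-1)+1)+1) * C₀, ?_, ?_⟩
  · have h1 : (0:ℝ) < 2*Real.pi*(2*(d:ℝ)*(4*(n:ℝ))^(2*d-1)+1)+1 := by positivity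
    positivity
  intro j q hj hq1 hq2 Kj hKj a b _hgcd δ hδ1 hδ2 lam ξ hlam hxi
  have hq0 : (0:ℝ) < q := by exact_mod_cast hq1
  set P : ℝ := 2 ^ j with hP
  have hPpos : (0:ℝ) < P := by positivity
  -- rpow-to-npow conversions
  have h2pow : ∀ m : ℕ, (2:ℝ) ^ (-(m:ℝ)) = ((2:ℝ)^m)⁻¹ := fun m => by
    rw [Real.rpow_neg (by norm_num : (0:ℝ) ≤ 2), Real.rpow_natCast]
  have hq4 : (q:ℝ) ≤ P / 4 := by
    have h24 : (2:ℝ)^((j:ℝ) - 2) = P / 4 := by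
      rw [show (j:ℝ) - 2 = ((j:ℝ)) + (-(2:ℝ)) by ring,
        Real.rpow_add (by norm_num : (0:ℝ) < 2), Real.rpow_natCast]
      rw [show (-(2:ℝ)) = -(((2:ℕ)):ℝ) by norm_num, h2pow 2]
      rw [hP]
      norm_num
      ring
    rwa [h24] at hq2
  have hδpos : 0 < δ := lt_trans (by positivity) hδ1
  have hδP : P⁻¹ < δ := by
    rw [hP]
    rw [h2pow j] at hδ1
    exact hδ1
  have hν2 : |lam - (a:ℝ)/q| ≤ δ * (P^(2*d-1))⁻¹ := by
    have h1 : (2:ℝ)^(-((2*(d:ℝ)-1) * j)) = (P^(2*d-1))⁻¹ := by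
      have h2 : (2*(d:ℝ)-1) * j = (((2*d-1) * j : ℕ) : ℝ) := by
        push_cast [Nat.cast_sub (show 1 ≤ 2*d by omega)]
        ring
      rw [h2, h2pow ((2*d-1)*j), hP, ← pow_mul, Nat.mul_comm]
    rwa [h1] at hlam
  have hKbd : ∀ x, ‖Kj x‖ ≤ C₀ / P^n := by
    intro x
    have h1 := hKj.2.2.2.1 x
    have h2 : (2:ℝ)^(-((j:ℝ)*n)) = (P^n)⁻¹ := by
      rw [show ((j:ℝ)*(n:ℝ)) = ((j*n : ℕ):ℝ) by push_cast; ring, h2pow (j*n), hP, pow_mul]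
    rw [h2] at h1
    rw [div_eq_mul_inv]
    exact h1
  have hKdiff : Differentiable ℝ Kj := (hKj.1).differentiable (by norm_num)
  have hKlip : ∀ u x : Rn n, ‖Kj u - Kj x‖ ≤ (C₀ / (P^n * P)) * ‖u - x‖ := by
    intro u x
    have h2 : (2:ℝ)^(-((j:ℝ)*((n:ℝ)+1))) = (P^n * P)⁻¹ := by
      rw [show ((j:ℝ)*((n:ℝ)+1)) = ((j*n + j : ℕ):ℝ) by push_cast; ring, h2pow (j*n+j),
        hP, pow_add, pow_mul]
    refine convex_univ.norm_image_sub_le_of_norm_fderiv_le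
      (fun y _ => hKdiff y) (fun y _ => ?_) (Set.mem_univ x) (Set.mem_univ u)
    have h1 := hKj.2.2.2.2 y
    rw [h2] at h1
    rw [div_eq_mul_inv]
    exact h1
  have hKsupp : ∀ x : Rn n, Kj x ≠ 0 → ‖x‖ ≤ 2*P := by
    intro x hx
    have h1 := hKj.2.1 (Function.mem_support.mpr hx)
    rw [Metric.mem_closedBall, dist_zero_right] at h1
    calc ‖x‖ ≤ (2:ℝ)^(j+1) := h1
      _ = 2*P := by rw [hP, pow_succ]; ring
  -- main objects
  set ν : ℝ := lam - (a:ℝ)/q with hνdef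
  set η : Rn n := ξ - ((q:ℝ))⁻¹ • itc b with hηdef
  set g : Rn n → ℝ := fun w => ν * (∑ i, w i^2)^d + ∑ i, η i * w i with hg
  set F : Rn n → ℂ := fun x => eC (g x) * Kj x with hF
  have hηbd : ‖η‖ ≤ δ := hxi
  have heCne : ∀ t : ℝ, eC t ≠ 0 := by
    intro t h
    have := norm_eC t
    rw [h] at this
    simp at this
  have hPhiF : Phi d Kj ν η = ∫ x : Rn n, F x := rfl
  have hcoord : ∀ (i : Fin n), Continuous fun x : Rn n => x i := by
    intro i
    exact (EuclideanSpace.proj (𝕜 := ℝ) (i : Fin n)).continuous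
  have heCcont : Continuous eC := by
    unfold eC
    exact Complex.continuous_exp.comp (continuous_const.mul Complex.continuous_ofReal)
  have hgcont : Continuous g := by
    rw [hg]
    apply Continuous.add
    · exact continuous_const.mul ((continuous_finset_sum _ fun i _ => (hcoord i).pow 2).pow d)
    · exact continuous_finset_sum _ fun i _ => continuous_const.mul (hcoord i)
  have hcont : Continuous F := by
    rw [hF]
    exact (heCcont.comp hgcont).mul (hKj.1).continuous
  have hsuppF : Function.support F ⊆ Metric.closedBall 0 (2*P) := by
    intro x hx
    rw [Metric.mem_closedBall, dist_zero_right]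
    refine hKsupp x fun h0 => hx ?_
    rw [hF]
    simp [h0]
  have hcs : HasCompactSupport F := by
    show IsCompact (tsupport F)
    exact (isCompact_closedBall (0 : Rn n) (2*P)).of_isClosed_subset isClosed_closure
      (closure_minimal hsuppF Metric.isClosed_closedBall)
  have hFint : Integrable F := hcont.integrable_of_hasCompactSupport hcs
  -- the Lipschitz-type estimate
  set Ctil : ℝ := 2*Real.pi*(2*(d:ℝ)*(4*(n:ℝ))^(2*d-1)+1)+1 with hCtil
  set Lip : ℝ := Ctil * C₀ * δ / P^n with hLip
  have hCtilpos : 0 < Ctil := by rw [hCtil]; positivity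
  have hLippos : 0 < Lip := by rw [hLip]; positivity
  have hCtilge1 : 1 ≤ Ctil := by
    have h0 : 0 ≤ 2*Real.pi*(2*(d:ℝ)*(4*(n:ℝ))^(2*d-1)+1) := by positivity
    rw [hCtil]
    linarith
  have hFlip : ∀ u x : Rn n, ‖x - u‖ ≤ (q:ℝ)*n → ‖F u - F x‖ ≤ Lip * ‖x - u‖ := by
    intro u x hux
    have hKlip' : ‖Kj u - Kj x‖ ≤ (C₀/P^n * δ) * ‖u - x‖ := by
      refine (hKlip u x).trans ?_
      apply mul_le_mul_of_nonneg_right ?_ (norm_nonneg _)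
      rw [show C₀/(P^n*P) = C₀/P^n * P⁻¹ by field_simp]
      exact mul_le_mul_of_nonneg_left hδP.le (by positivity)
    have huxsymm : ‖u - x‖ = ‖x - u‖ := norm_sub_rev u x
    by_cases hu2P : ‖u‖ ≤ 2*P
    · -- main case
      have hFsplit : F u - F x = (eC (g u) - eC (g x)) * Kj u + eC (g x) * (Kj u - Kj x) := by
        simp only [hF]
        ring
      have hxnorm : ‖x‖ ≤ 4*(n:ℝ)*P := by
        have h1 : ‖x‖ ≤ ‖u‖ + ‖x - u‖ := by
          calc ‖x‖ = ‖u + (x - u)‖ := by congr 1; abel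
            _ ≤ ‖u‖ + ‖x - u‖ := norm_add_le _ _
        have h2 : (q:ℝ)*n ≤ P*n := by
          apply mul_le_mul_of_nonneg_right ?_ (Nat.cast_nonneg n)
          linarith
        have h3 : (1:ℝ) ≤ n := by exact_mod_cast hn
        nlinarith
      have hunorm : ‖u‖ ≤ 4*(n:ℝ)*P := by
        have h3 : (1:ℝ) ≤ n := by exact_mod_cast hn
        nlinarith
      set M : ℝ := 4*(n:ℝ)*P with hM
      have hMpos : 0 < M := by rw [hM]; positivity
      have hsq : |(∑ i, u i^2) - (∑ i, x i^2)| ≤ 2*M*‖u - x‖ := by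
        rw [sum_sq_eq_norm_sq u, sum_sq_eq_norm_sq x]
        have h1 : ‖u‖^2 - ‖x‖^2 = (‖u‖ - ‖x‖) * (‖u‖ + ‖x‖) := by ring
        rw [h1, abs_mul]
        have h2 : |‖u‖ - ‖x‖| ≤ ‖u - x‖ := abs_norm_sub_norm_le u x
        have h3 : |‖u‖ + ‖x‖| ≤ 2*M := by
          rw [_root_.abs_of_nonneg (by positivity)]
          linarith
        calc |‖u‖ - ‖x‖| * |‖u‖ + ‖x‖| ≤ ‖u - x‖ * (2*M) :=
              mul_le_mul h2 h3 (abs_nonneg _) (norm_nonneg _)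
          _ = 2*M*‖u - x‖ := by ring
      have hpow : |(∑ i, u i^2)^d - (∑ i, x i^2)^d|
          ≤ (d:ℝ) * (M^2)^(d-1) * (2*M*‖u - x‖) := by
        have h1 := pow_sub_pow_abs_le (R := M^2) (by positivity) d
          (∑ i, u i^2) (∑ i, x i^2) (by positivity) (by positivity) ?_ ?_
        · refine h1.trans ?_
          exact mul_le_mul_of_nonneg_left hsq (by positivity)
        · rw [sum_sq_eq_norm_sq u]
          exact pow_le_pow_left₀ (norm_nonneg u) hunorm 2
        · rw [sum_sq_eq_norm_sq x]
          exact pow_le_pow_left₀ (norm_nonneg x) hxnorm 2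
      have hMpow : (M^2)^(d-1) * (2*M) = 2 * M^(2*d-1) := by
        rw [← pow_mul]
        have h1 : M^(2*(d-1)) * M = M^(2*d-1) := by
          rw [← pow_succ]
          congr 1
          omega
        calc (M^(2*(d-1))) * (2*M) = 2 * (M^(2*(d-1)) * M) := by ring
          _ = 2 * M^(2*d-1) := by rw [h1]
      have hMP : M^(2*d-1) = (4*(n:ℝ))^(2*d-1) * P^(2*d-1) := by
        rw [hM, mul_pow]
      have htermA : |ν| * |(∑ i, u i^2)^d - (∑ i, x i^2)^d|
          ≤ 2*(d:ℝ)*(4*(n:ℝ))^(2*d-1) * δ * ‖u - x‖ := by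
        calc |ν| * |(∑ i, u i^2)^d - (∑ i, x i^2)^d|
            ≤ (δ * (P^(2*d-1))⁻¹) * ((d:ℝ) * (M^2)^(d-1) * (2*M*‖u - x‖)) :=
              mul_le_mul hν2 hpow (abs_nonneg _) (by positivity)
          _ = δ * (P^(2*d-1))⁻¹ * (d:ℝ) * ((M^2)^(d-1) * (2*M)) * ‖u - x‖ := by ring
          _ = δ * (P^(2*d-1))⁻¹ * (d:ℝ) * (2 * ((4*(n:ℝ))^(2*d-1) * P^(2*d-1))) * ‖u - x‖ := by
              rw [hMpow, hMP]
          _ = 2*(d:ℝ)*(4*(n:ℝ))^(2*d-1) * δ * (P^(2*d-1) * (P^(2*d-1))⁻¹) * ‖u - x‖ := by ring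
          _ = 2*(d:ℝ)*(4*(n:ℝ))^(2*d-1) * δ * ‖u - x‖ := by
              rw [mul_inv_cancel₀ (by positivity : P^(2*d-1) ≠ 0)]
              ring
      have hinner : |(∑ i, η i * u i) - ∑ i, η i * x i| ≤ δ * ‖u - x‖ := by
        have h1 : (∑ i, η i * u i) - ∑ i, η i * x i = inner (𝕜 := ℝ) η (u - x) := by
          rw [PiLp.inner_apply]
          rw [← Finset.sum_sub_distrib]
          refine Finset.sum_congr rfl fun i _ => ?_
          simp [RCLike.inner_apply, PiLp.sub_apply]
          ring
        rw [h1]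
        calc |inner (𝕜 := ℝ) η (u - x)| ≤ ‖η‖ * ‖u - x‖ := abs_real_inner_le_norm η (u - x)
          _ ≤ δ * ‖u - x‖ := mul_le_mul_of_nonneg_right hηbd (norm_nonneg _)
      have hgd : |g u - g x| ≤ (2*(d:ℝ)*(4*(n:ℝ))^(2*d-1) + 1) * δ * ‖u - x‖ := by
        simp only [hg]
        have h1 : ν * (∑ i, u i^2)^d + ∑ i, η i * u i - (ν * (∑ i, x i^2)^d + ∑ i, η i * x i)
            = ν * ((∑ i, u i^2)^d - (∑ i, x i^2)^d) + ((∑ i, η i * u i) - ∑ i, η i * x i) := by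
          ring
        rw [h1]
        refine (abs_add_le _ _).trans ?_
        rw [abs_mul]
        calc |ν| * |(∑ i, u i^2)^d - (∑ i, x i^2)^d| + |(∑ i, η i * u i) - ∑ i, η i * x i|
            ≤ 2*(d:ℝ)*(4*(n:ℝ))^(2*d-1) * δ * ‖u - x‖ + δ * ‖u - x‖ :=
              add_le_add htermA hinner
          _ = (2*(d:ℝ)*(4*(n:ℝ))^(2*d-1) + 1) * δ * ‖u - x‖ := by ring
      have heCd : ‖eC (g u) - eC (g x)‖
          ≤ 2*Real.pi*((2*(d:ℝ)*(4*(n:ℝ))^(2*d-1) + 1) * δ * ‖u - x‖) := by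
        refine (eC_lip (g u) (g x)).trans ?_
        exact mul_le_mul_of_nonneg_left hgd (by positivity)
      calc ‖F u - F x‖ = ‖(eC (g u) - eC (g x)) * Kj u + eC (g x) * (Kj u - Kj x)‖ := by
            rw [hFsplit]
        _ ≤ ‖(eC (g u) - eC (g x)) * Kj u‖ + ‖eC (g x) * (Kj u - Kj x)‖ := norm_add_le _ _
        _ = ‖eC (g u) - eC (g x)‖ * ‖Kj u‖ + ‖Kj u - Kj x‖ := by
            rw [norm_mul, norm_mul, norm_eC, one_mul]
        _ ≤ (2*Real.pi*((2*(d:ℝ)*(4*(n:ℝ))^(2*d-1) + 1) * δ * ‖u - x‖)) * (C₀/P^n)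
            + (C₀/P^n * δ) * ‖u - x‖ := by
            refine add_le_add ?_ hKlip'
            exact mul_le_mul heCd (hKbd u) (norm_nonneg _) (by positivity)
        _ = Lip * ‖u - x‖ := by
            rw [hLip, hCtil]
            field_simp
        _ = Lip * ‖x - u‖ := by rw [huxsymm]
    · -- far case : Kj u = 0
      have hKu0 : Kj u = 0 := by
        by_contra hKu
        exact hu2P (hKsupp u hKu)
      have hFu0 : F u = 0 := by
        rw [hF]
        simp [hKu0]
      have hLipK : C₀/P^n * δ ≤ Lip := by
        rw [hLip]
        rw [show Ctil * C₀ * δ / P^n = Ctil * (C₀/P^n * δ) by field_simp]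
        exact le_mul_of_one_le_left (by positivity) hCtilge1
      calc ‖F u - F x‖ = ‖F x‖ := by rw [hFu0, zero_sub, norm_neg]
        _ = ‖Kj x‖ := by simp only [hF]; rw [norm_mul, norm_eC, one_mul]
        _ = ‖Kj u - Kj x‖ := by rw [hKu0, zero_sub, norm_neg]
        _ ≤ (C₀/P^n * δ) * ‖u - x‖ := hKlip'
        _ ≤ Lip * ‖x - u‖ := by
            rw [huxsymm] at *
            exact mul_le_mul_of_nonneg_right hLipK (norm_nonneg _)
  -- decomposition of the lattice sum
  set f : Zn n → ℂ := fun y => eC (lam * ((nsq2d d y : ℤ) : ℝ) + ∑ i, ξ i * (y i : ℝ)) * Kj (itc y)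
    with hf
  have hmjf : mj d Kj lam ξ = ∑' y, f y := rfl
  have hfvanish : ∀ y : Zn n,
      y ∉ (Fintype.piFinset fun _ : Fin n => Finset.Icc ⌈-(2*P)⌉ ⌊(2*P)⌋) → f y = 0 := by
    intro y hy
    by_contra h0
    have hK0 : Kj (itc y) ≠ 0 := by
      intro h1
      apply h0
      rw [hf]
      simp [h1]
    have h2 : ‖itc y‖ ≤ 2*P := hKsupp _ hK0
    apply hy
    rw [Fintype.mem_piFinset]
    intro i
    have h3 : |(y i : ℝ)| ≤ 2*P := le_trans (coord_abs_le_norm (itc y) i) h2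
    rw [abs_le] at h3
    rw [Finset.mem_Icc]
    constructor
    · exact Int.ceil_le.mpr h3.1
    · exact Int.le_floor.mpr h3.2
  have hfsum : Summable f := summable_of_ne_finset_zero hfvanish
  set E := zEquiv n q hq1 with hE
  have hsum2 : Summable (f ∘ E) := (E.summable_iff).mpr hfsum
  have hsplit : (∑' y, f y) = ∑ r : Fin n → Fin q, ∑' z : Zn n, f (E (r, z)) := by
    calc (∑' y, f y) = ∑' p : (Fin n → Fin q) × Zn n, f (E p) := (E.tsum_eq f).symm
      _ = ∑' r : Fin n → Fin q, ∑' z : Zn n, f (E (r, z)) := hsum2.tsum_prod' hsum2.prod_factor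
      _ = ∑ r : Fin n → Fin q, ∑' z : Zn n, f (E (r, z)) := tsum_fintype _
  -- pointwise factorization
  set cr : (Fin n → Fin q) → ℝ := fun r =>
    (((a * (∑ i, (((r i : ℕ)) : ℤ)^2)^d + ∑ i, b i * ((r i : ℕ) : ℤ) : ℤ)) : ℝ) / q with hcr
  have hfact : ∀ (r : Fin n → Fin q) (z : Zn n),
      f (E (r, z)) = eC (cr r) * F (itc (E (r, z))) := by
    intro r z
    set y : Zn n := E (r, z) with hy
    have hyi : ∀ i, y i = (q:ℤ) * z i + ((r i : ℕ) : ℤ) := fun i => rfl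
    have hN : ((nsq2d d y : ℤ) : ℝ) = (∑ i, ((y i : ℝ))^2)^d := by
      unfold nsq2d
      push_cast
      ring
    have hξ' : ∀ i, ξ i = η i + (b i : ℝ)/q := by
      intro i
      have h1 : η i = ξ i - ((q:ℝ))⁻¹ * (b i : ℝ) := by
        rw [hηdef]
        simp [PiLp.sub_apply, PiLp.smul_apply, smul_eq_mul, itc]
      rw [h1]
      field_simp
      ring
    have hlam' : lam = ν + (a:ℝ)/q := by rw [hνdef]; ring
    set Ay : ℤ := a * (∑ i, (y i)^2)^d + ∑ i, b i * y i with hAy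
    have hsumξ : (∑ i, ξ i * (y i:ℝ)) = ∑ i, η i * (y i:ℝ) + (∑ i, (b i:ℝ) * (y i:ℝ))/q := by
      rw [Finset.sum_div, ← Finset.sum_add_distrib]
      refine Finset.sum_congr rfl fun i _ => ?_
      rw [hξ' i]
      field_simp
    have hexp : lam * ((nsq2d d y : ℤ) : ℝ) + ∑ i, ξ i * (y i : ℝ)
        = (Ay : ℝ)/q + (ν * (∑ i, ((y i:ℝ))^2)^d + ∑ i, η i * (y i : ℝ)) := by
      rw [hN, hlam', hsumξ, hAy]
      push_cast
      field_simp
      ring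
    have hstep1 : f y
        = eC ((Ay : ℝ)/q + (ν * (∑ i, ((y i:ℝ))^2)^d + ∑ i, η i * (y i : ℝ))) * Kj (itc y) := by
      rw [hf]
      simp only []
      rw [hexp]
    have hdvd : (q:ℤ) ∣ Ay - (a * (∑ i, (((r i : ℕ)) : ℤ)^2)^d + ∑ i, b i * ((r i : ℕ) : ℤ)) := by
      rw [hAy]
      simp only [hyi]
      exact key_dvd d q a b z _
    have hcrr : eC ((Ay : ℝ)/q) = eC (cr r) := by
      rw [hcr]
      exact eC_int_div_congr hq1 hdvd
    rw [hstep1, eC_add, hcrr]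
    simp only [hF, hg, itc]
    ring
  set G : (Fin n → Fin q) → ℂ := fun r => ∑' z : Zn n, F (itc (E (r, z))) with hG
  have hsplit2 : mj d Kj lam ξ = ∑ r : Fin n → Fin q, eC (cr r) * G r := by
    rw [hmjf, hsplit]
    refine Finset.sum_congr rfl fun r _ => ?_
    rw [hG]
    simp only [← tsum_mul_left]
    exact tsum_congr fun z => hfact r z
  set cC : ℂ := ((q:ℂ))⁻¹ ^ n with hcC
  have hqC : ((q:ℂ)) ≠ 0 := Nat.cast_ne_zero.mpr (Nat.one_le_iff_ne_zero.mp hq1)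
  have hSg : Sgauss n d a q b = cC * ∑ r : Fin n → Fin q, eC (cr r) :=
    Sgauss_fintype d a q hq1 b
  -- per-residue bound
  have hper : ∀ r : Fin n → Fin q,
      ‖G r - cC * Phi d Kj ν η‖ ≤ (8*P/(q:ℝ))^n * (Lip * ((n:ℝ)*q)) := by
    intro r
    set rI : Zn n := fun i => ((r i : ℕ) : ℤ) with hrI
    have hrI0 : ∀ i, 0 ≤ rI i := fun i => Int.natCast_nonneg _
    have hrIq : ∀ i, rI i < q := fun i => by
      show ((r i : ℕ) : ℤ) < (q:ℤ)
      exact_mod_cast (r i).2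
    have hEco : ∀ (z : Zn n) (i : Fin n), (E (r, z)) i = (q:ℤ) * z i + rI i := fun z i => rfl
    set I : Zn n → ℂ := fun z => ∫ x in IBox q (E (r, z)), F x with hI
    have hboxsum : HasSum I (∫ x, F x) := by
      have h1 := hasSum_integral_iUnion (μ := volume) (f := F)
        (s := fun z : Zn n => IBox q (fun i => (q:ℤ) * z i + rI i))
        (fun z => IBox_measurableSet q _) (IBox_pairwise_disjoint hq1 rI) ?_
      · rw [IBox_iUnion hq1 rI, Measure.restrict_univ] at h1
        exact h1
      · rw [IBox_iUnion hq1 rI]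
        exact hFint.integrableOn
    have hIsum : Summable I := hboxsum.summable
    have hPhiI : Phi d Kj ν η = ∑' z, I z := by rw [hPhiF, ← hboxsum.tsum_eq]
    have hFzsum : Summable fun z : Zn n => F (itc (E (r, z))) := by
      have h1 := hsum2.prod_factor r
      have h3 : Summable fun z : Zn n => eC (cr r) * F (itc (E (r, z))) := by
        refine h1.congr fun z => ?_
        exact (hfact r z)
      have h4 := h3.mul_left (eC (cr r))⁻¹
      refine h4.congr fun z => ?_
      rw [inv_mul_cancel_left₀ (heCne (cr r))]
    have hsub : G r - cC * Phi d Kj ν η = ∑' z, (F (itc (E (r, z))) - cC * I z) := by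
      rw [hG, hPhiI, ← tsum_mul_left, ← Summable.tsum_sub hFzsum (hIsum.mul_left cC)]
    -- index window
    set B : ℤ := 2^(j+1) + q with hB
    have hq0' : (0:ℤ) < q := by exact_mod_cast hq1
    have hBpos : (0:ℤ) ≤ B := by positivity
    have hBreal : (B:ℝ) = 2*P + q := by
      rw [hB]
      push_cast
      rw [hP, pow_succ]
      ring
    set lo : Fin n → ℤ := fun i => (-B - rI i) / q with hlo
    set hi : Fin n → ℤ := fun i => (B - rI i) / q with hhi
    set Z : Finset (Zn n) := Fintype.piFinset fun i => Finset.Icc (lo i) (hi i) with hZ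
    have hmem : ∀ (z : Zn n) (i : Fin n), |(q:ℤ) * z i + rI i| ≤ B →
        z i ∈ Finset.Icc (lo i) (hi i) := by
      intro z i h
      rw [abs_le] at h
      rw [Finset.mem_Icc]
      constructor
      · calc lo i ≤ ((q:ℤ) * z i)/q := Int.ediv_le_ediv hq0' (by linarith [h.1])
          _ = z i := Int.mul_ediv_cancel_left _ hq0'.ne'
      · calc z i = ((q:ℤ) * z i)/q := (Int.mul_ediv_cancel_left _ hq0'.ne').symm
          _ ≤ hi i := Int.ediv_le_ediv hq0' (by linarith [h.2])
    have hvanish : ∀ z : Zn n, z ∉ Z → F (itc (E (r, z))) - cC * I z = 0 := by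
      intro z hz
      rw [hZ, Fintype.mem_piFinset] at hz
      push_neg at hz
      obtain ⟨i, hi2⟩ := hz
      have hgt : B < |(q:ℤ) * z i + rI i| := by
        by_contra hle
        push_neg at hle
        exact hi2 (hmem z i hle)
      have hcoord_big : 2*P + (q:ℝ) < |((E (r, z)) i : ℝ)| := by
        have h1 : ((E (r, z)) i : ℝ) = (((q:ℤ) * z i + rI i : ℤ) : ℝ) := by
          rw [hEco z i]
        rw [h1, ← Int.cast_abs, ← hBreal]
        exact_mod_cast hgt
      have hFz : F (itc (E (r, z))) = 0 := by
        have hKz : Kj (itc (E (r, z))) = 0 := by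
          by_contra hK
          have h5 := hKsupp _ hK
          have h6 : |((E (r, z)) i : ℝ)| ≤ ‖itc (E (r, z))‖ := coord_abs_le_norm (itc (E (r, z))) i
          linarith
        simp only [hF]
        rw [hKz, mul_zero]
      have hIz : I z = 0 := by
        rw [hI]
        apply setIntegral_eq_zero_of_forall_eq_zero
        intro x hx
        have hKx : Kj x = 0 := by
          by_contra hK
          have h5 := hKsupp _ hK
          have h6 : |x i| ≤ ‖x‖ := coord_abs_le_norm x i
          obtain ⟨h7, h8⟩ := hx i
          have h10 : |((E (r, z)) i : ℝ) - x i| < q := by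
            rw [abs_sub_comm, abs_lt]
            constructor <;> linarith
          have h11 := abs_sub_abs_le_abs_sub (((E (r, z)) i : ℝ)) (x i)
          linarith
        simp only [hF]
        rw [hKx, mul_zero]
      rw [hFz, hIz, mul_zero, sub_zero]
    -- per-term bound
    have hterm : ∀ z : Zn n, ‖F (itc (E (r, z))) - cC * I z‖ ≤ Lip * ((n:ℝ)*q) := by
      intro z
      set u : Rn n := itc (E (r, z)) with hu
      have hvol : volume (IBox q (E (r, z))) = ENNReal.ofReal q ^ n := IBox_volume q _
      have hvolfin : volume (IBox q (E (r, z))) < ⊤ := by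
        rw [hvol]
        exact ENNReal.pow_lt_top ENNReal.ofReal_lt_top
      have hvolR : (volume (IBox q (E (r, z)))).toReal = (q:ℝ)^n := by
        rw [hvol, ENNReal.toReal_pow, ENNReal.toReal_ofReal hq0.le]
      have hdist : ∀ x ∈ IBox q (E (r, z)), ‖x - u‖ ≤ (q:ℝ)*n := by
        intro x hx
        apply norm_le_of_coords _ _ hq0.le
        intro i
        obtain ⟨h1, h2⟩ := hx i
        have h3 : (x - u) i = x i - ((E (r, z)) i : ℝ) := rfl
        rw [h3, abs_le]
        constructor <;> linarith
      have hIint : IntegrableOn F (IBox q (E (r, z))) := hFint.integrableOn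
      have hconst : IntegrableOn (fun _ : Rn n => F u) (IBox q (E (r, z))) :=
        integrableOn_const hvolfin.ne
      have hsubint : (∫ x in IBox q (E (r, z)), (F x - F u))
          = I z - ((q:ℝ)^n : ℝ) • F u := by
        rw [integral_sub hIint hconst, setIntegral_const, measureReal_def, hvolR, hI]
      have hcancel : cC * (((q:ℝ)^n : ℝ) • F u) = F u := by
        rw [show (((q:ℝ)^n : ℝ) • F u) = (((q:ℝ)^n : ℝ) : ℂ) * F u from Complex.real_smul]
        rw [hcC]
        push_cast
        rw [← mul_assoc, ← mul_pow, inv_mul_cancel₀ hqC, one_pow, one_mul]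
      have hFu : F u - cC * I z = -(cC * ∫ x in IBox q (E (r, z)), (F x - F u)) := by
        rw [hsubint]
        rw [mul_sub, hcancel]
        ring
      rw [hFu, norm_neg, norm_mul]
      have hcCnorm : ‖cC‖ = ((q:ℝ)⁻¹)^n := by
        rw [hcC, norm_pow, norm_inv, Complex.norm_natCast]
      have hint : ‖∫ x in IBox q (E (r, z)), (F x - F u)‖
          ≤ (Lip * ((n:ℝ)*q)) * (volume (IBox q (E (r, z)))).toReal := by
        apply norm_setIntegral_le_of_norm_le_const hvolfin
        intro x hx
        rw [norm_sub_rev]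
        calc ‖F u - F x‖ ≤ Lip * ‖x - u‖ := hFlip u x (hdist x hx)
          _ ≤ Lip * ((q:ℝ)*n) := mul_le_mul_of_nonneg_left (hdist x hx) hLippos.le
          _ = Lip * ((n:ℝ)*q) := by ring
      calc ‖cC‖ * ‖∫ x in IBox q (E (r, z)), (F x - F u)‖
          ≤ ((q:ℝ)⁻¹)^n * ((Lip * ((n:ℝ)*q)) * (q:ℝ)^n) := by
            rw [hcCnorm]
            apply mul_le_mul_of_nonneg_left ?_ (by positivity)
            rw [hvolR] at hint
            exact hint
        _ = Lip * ((n:ℝ)*q) := by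
            rw [show ((q:ℝ)⁻¹)^n * ((Lip * ((n:ℝ)*q)) * (q:ℝ)^n)
              = (Lip * ((n:ℝ)*q)) * (((q:ℝ))⁻¹^n * (q:ℝ)^n) by ring]
            rw [← mul_pow, inv_mul_cancel₀ hq0.ne', one_pow, mul_one]
    -- cardinality bound
    have hBq : ((B/q : ℤ) : ℝ) ≤ (B:ℝ)/q := by
      have h1 : (q:ℤ) * (B/q) ≤ B := by
        have h2 := Int.mul_ediv_add_emod B q
        have h3 := Int.emod_nonneg B hq0'.ne'
        linarith
      rw [le_div_iff₀ hq0]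
      have h4 : ((q:ℤ) * (B/q) : ℤ) ≤ B := h1
      calc ((B/q : ℤ) : ℝ) * q = (((q:ℤ) * (B/q) : ℤ) : ℝ) := by push_cast; ring
        _ ≤ (B:ℝ) := by exact_mod_cast h4
    have hcardi : ∀ i : Fin n, ((Finset.Icc (lo i) (hi i)).card : ℝ) ≤ 8*P/(q:ℝ) := by
      intro i
      have h1 : hi i ≤ B / q := Int.ediv_le_ediv hq0' (by linarith [hrI0 i])
      have h2 : -(B/q) - 2 ≤ lo i := by
        have h3 : (-B - q) ≤ -B - rI i := by linarith [hrIq i]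
        have h4 : (-B - q)/q ≤ lo i := Int.ediv_le_ediv hq0' h3
        have h5 : (-B - q)/q = (-B)/q - 1 := by
          rw [show -B - (q:ℤ) = -B + (q:ℤ) * (-1) by ring, Int.add_mul_ediv_left _ _ hq0'.ne']
          ring
        have h6 : -(B/q) - 1 ≤ (-B)/q := by
          rw [Int.le_ediv_iff_mul_le hq0']
          have h7 := Int.mul_ediv_add_emod B q
          have h8 := Int.emod_lt_of_pos B hq0'
          nlinarith
        omega
      have h9 : hi i + 1 - lo i ≤ 2*(B/q) + 3 := by omega
      have h10 : (0:ℤ) ≤ B/q := Int.ediv_nonneg hBpos hq0'.le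
      have h11 : ((Finset.Icc (lo i) (hi i)).card : ℤ) ≤ 2*(B/q) + 3 := by
        rw [Int.card_Icc]
        calc ((hi i + 1 - lo i).toNat : ℤ) = max (hi i + 1 - lo i) 0 := Int.toNat_eq_max _ ▸ rfl
          _ ≤ 2*(B/q) + 3 := by omega
      have h12 : ((Finset.Icc (lo i) (hi i)).card : ℝ) ≤ 2*((B/q : ℤ):ℝ) + 3 := by
        exact_mod_cast h11
      refine h12.trans ?_
      have h13 : 2*((B/q : ℤ):ℝ) + 3 ≤ 2*((B:ℝ)/q) + 3 := by linarith
      refine h13.trans ?_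
      rw [hBreal]
      rw [show 2*((2*P + (q:ℝ))/q) + 3 = (4*P + 5*q)/q by field_simp; ring]
      gcongr
      linarith
    have hcardb : ((Z.card : ℕ) : ℝ) ≤ (8*P/(q:ℝ))^n := by
      rw [hZ, Fintype.card_piFinset]
      push_cast
      calc (∏ i, ((Finset.Icc (lo i) (hi i)).card : ℝ))
          ≤ ∏ _i : Fin n, (8*P/(q:ℝ)) :=
            Finset.prod_le_prod (fun i _ => Nat.cast_nonneg _) (fun i _ => hcardi i)
        _ = (8*P/(q:ℝ))^n := by rw [Finset.prod_const, Finset.card_univ, Fintype.card_fin]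
    -- combine
    rw [hsub, tsum_eq_sum hvanish]
    calc ‖∑ z ∈ Z, (F (itc (E (r, z))) - cC * I z)‖
        ≤ ∑ z ∈ Z, ‖F (itc (E (r, z))) - cC * I z‖ := norm_sum_le _ _
      _ ≤ Z.card • (Lip * ((n:ℝ)*q)) := Finset.sum_le_card_nsmul _ _ _ (fun z _ => hterm z)
      _ = ((Z.card : ℕ):ℝ) * (Lip * ((n:ℝ)*q)) := nsmul_eq_mul _ _
      _ ≤ (8*P/(q:ℝ))^n * (Lip * ((n:ℝ)*q)) :=
          mul_le_mul_of_nonneg_right hcardb (by positivity)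
  -- assemble
  have hdiff : mj d Kj lam ξ - Sgauss n d a q b * Phi d Kj ν η
      = ∑ r : Fin n → Fin q, eC (cr r) * (G r - cC * Phi d Kj ν η) := by
    rw [hsplit2, hSg]
    have h1 : (cC * ∑ r : Fin n → Fin q, eC (cr r)) * Phi d Kj ν η
        = ∑ r : Fin n → Fin q, eC (cr r) * (cC * Phi d Kj ν η) := by
      rw [mul_comm cC, mul_assoc, Finset.sum_mul]
    rw [h1, ← Finset.sum_sub_distrib]
    exact Finset.sum_congr rfl fun r _ => (mul_sub _ _ _).symm
  rw [hdiff]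
  have hnorm : ‖∑ r : Fin n → Fin q, eC (cr r) * (G r - cC * Phi d Kj ν η)‖
      ≤ ∑ r : Fin n → Fin q, ‖G r - cC * Phi d Kj ν η‖ := by
    refine (norm_sum_le _ _).trans ?_
    refine Finset.sum_le_sum fun r _ => ?_
    rw [norm_mul, norm_eC, one_mul]
  refine hnorm.trans ?_
  have hcard : (Finset.univ : Finset (Fin n → Fin q)).card = q ^ n := by
    rw [Finset.card_univ]
    simp [Fintype.card_fun]
  have htot : (∑ r : Fin n → Fin q, ‖G r - cC * Phi d Kj ν η‖)
      ≤ (q:ℝ)^n * ((8*P/(q:ℝ))^n * (Lip * ((n:ℝ)*q))) := by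
    refine (Finset.sum_le_card_nsmul _ _ _ fun r _ => hper r).trans ?_
    rw [hcard, nsmul_eq_mul]
    push_cast
    exact le_rfl
  refine htot.trans ?_
  have heq : (q:ℝ)^n * ((8*P/(q:ℝ))^n * (Lip * ((n:ℝ)*q)))
      = 8^n * (n:ℝ) * Ctil * C₀ * q * δ := by
    rw [hLip, div_pow, mul_pow]
    field_simp
  rw [heq]
end
end
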